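/- Let κ > 0, s > 0, t̃ > κ and l > 0, and let x, y > 0 satisfy x² − y² = t̃² − κ² and 4x²y² = κ²s². Then [(κ²+x²+y²) sinh x + 2κy cosh x] sinh(lx) − |(κ²−x²−y²) sin y − 2κx cos y| · |sin(ly)| > l(κ²+x²+y²)(t̃²−κ²) > 0. -/

import Mathlib

/-! Replacing `sinh`, `cosh` by their lower bounds `x`, `1` and `|sin|`, `|cos|` by their upper
bounds `y`, `1` leaves `l x (A x + 2κy) - l y (A y + 2κx) = l A (x² - y²)` with
`A = κ² + x² + y²`: the cross terms `2κxy` cancel, and `x² - y² = t² - κ²`. -/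

open Real

lemma mul_add_lt_mul_sinh_add_mul_cosh {a b x : ℝ} (ha : 0 < a) (hb : 0 ≤ b) (hx : 0 < x) :
    a * x + b < a * sinh x + b * cosh x := by
  have hsinh : a * x < a * sinh x := mul_lt_mul_of_pos_left (self_lt_sinh_iff.2 hx) ha
  have hcosh : b ≤ b * cosh x := le_mul_of_one_le_right hb (one_le_cosh x)
  linarith

lemma abs_mul_sin_sub_mul_cos_le (c d y : ℝ) :
    |c * sin y - d * cos y| ≤ |c| * |y| + |d| :=
  calc |c * sin y - d * cos y| ≤ |c| * |sin y| + |d| * |cos y| := by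
        simpa only [abs_mul] using abs_sub (c * sin y) (d * cos y)
    _ ≤ |c| * |y| + |d| * 1 := by
        gcongr |c| * ?_ + |d| * ?_
        · exact abs_sin_le_abs
        · exact abs_cos_le_one y
    _ = |c| * |y| + |d| := by rw [mul_one]

theorem stmt_18_general (κ t l x y : ℝ) (hκ : 0 < κ) (ht : κ < t) (hl : 0 < l)
    (hx : 0 < x) (hy : 0 < y)
    (h1 : x ^ 2 - y ^ 2 = t ^ 2 - κ ^ 2) :
    ((κ ^ 2 + x ^ 2 + y ^ 2) * Real.sinh x + 2 * κ * y * Real.cosh x) * Real.sinh (l * x)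
        - |(κ ^ 2 - x ^ 2 - y ^ 2) * Real.sin y - 2 * κ * x * Real.cos y| * |Real.sin (l * y)|
      > l * (κ ^ 2 + x ^ 2 + y ^ 2) * (t ^ 2 - κ ^ 2) ∧
    l * (κ ^ 2 + x ^ 2 + y ^ 2) * (t ^ 2 - κ ^ 2) > 0 := by
  have hA : 0 < κ ^ 2 + x ^ 2 + y ^ 2 := by positivity
  have hlower : ((κ ^ 2 + x ^ 2 + y ^ 2) * x + 2 * κ * y) * (l * x)
      < ((κ ^ 2 + x ^ 2 + y ^ 2) * sinh x + 2 * κ * y * cosh x) * sinh (l * x) :=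
    mul_lt_mul (mul_add_lt_mul_sinh_add_mul_cosh hA (by positivity) hx)
      (self_lt_sinh_iff.2 (by positivity)).le (by positivity) (by positivity)
  have hcoeff : |κ ^ 2 - x ^ 2 - y ^ 2| ≤ κ ^ 2 + x ^ 2 + y ^ 2 := by
    rw [abs_le]; constructor <;> nlinarith
  have hupper : |(κ ^ 2 - x ^ 2 - y ^ 2) * sin y - 2 * κ * x * cos y| * |sin (l * y)|
      ≤ ((κ ^ 2 + x ^ 2 + y ^ 2) * y + 2 * κ * x) * (l * y) := by
    have hfirst := abs_mul_sin_sub_mul_cos_le (κ ^ 2 - x ^ 2 - y ^ 2) (2 * κ * x) y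
    rw [abs_of_pos hy, abs_of_pos (by positivity : 0 < 2 * κ * x)] at hfirst
    have hsecond : |sin (l * y)| ≤ l * y :=
      abs_sin_le_abs.trans_eq (abs_of_pos (by positivity))
    gcongr
    exact hfirst.trans (by gcongr)
  have hdiff : ((κ ^ 2 + x ^ 2 + y ^ 2) * x + 2 * κ * y) * (l * x)
      - ((κ ^ 2 + x ^ 2 + y ^ 2) * y + 2 * κ * x) * (l * y)
      = l * (κ ^ 2 + x ^ 2 + y ^ 2) * (t ^ 2 - κ ^ 2) := by
    rw [← h1]; ring
  have ht2 : 0 < t ^ 2 - κ ^ 2 := by nlinarith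
  exact ⟨by linarith, by positivity⟩

theorem stmt_18 (κ s t l x y : ℝ) (hκ : 0 < κ) (hs : 0 < s) (ht : κ < t) (hl : 0 < l)
    (hx : 0 < x) (hy : 0 < y)
    (h1 : x ^ 2 - y ^ 2 = t ^ 2 - κ ^ 2) (h2 : 4 * x ^ 2 * y ^ 2 = κ ^ 2 * s ^ 2) :
    ((κ ^ 2 + x ^ 2 + y ^ 2) * Real.sinh x + 2 * κ * y * Real.cosh x) * Real.sinh (l * x)
        - |(κ ^ 2 - x ^ 2 - y ^ 2) * Real.sin y - 2 * κ * x * Real.cos y| * |Real.sin (l * y)|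
      > l * (κ ^ 2 + x ^ 2 + y ^ 2) * (t ^ 2 - κ ^ 2) ∧
    l * (κ ^ 2 + x ^ 2 + y ^ 2) * (t ^ 2 - κ ^ 2) > 0 :=
  stmt_18_general κ t l x y hκ ht hl hx hy h1
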